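/- (Tree-model property of K^#.) If a K^# formula φ is satisfiable, then φ is satisfiable at the root of a finite tree: there is a finite labeled directed graph G and a vertex u such that (G,u) satisfies φ, every vertex of G is reachable from u, u has no incoming edge, and every vertex other than u has exactly one incoming edge. -/

import Mathlib

open scoped Classical

/-- A finite labeled directed graph: edges and a valuation of atomic
propositions (indexed by `ℕ`) at each vertex. -/
structure LGraph (V : Type) [Fintype V] where
  edge : V → V → Bool
  label : V → ℕ → Bool

mutual
/-- Formulas of the logic `K^#`. -/
inductive KForm : Type where
  | atom : ℕ → KForm
  | not : KForm → KForm
  | or : KForm → KForm → KForm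
  | ge0 : KExpr → KForm
/-- Expressions of the logic `K^#`. -/
inductive KExpr : Type where
  | const : ℤ → KExpr
  | ind : KForm → KExpr
  | count : KForm → KExpr
  | add : KExpr → KExpr → KExpr
  | scale : ℤ → KExpr → KExpr
end

mutual
/-- Truth of a `K^#` formula at a pointed graph. -/
def KForm.sat {V : Type} [Fintype V] (G : LGraph V) (u : V) : KForm → Bool
  | .atom p => G.label u p
  | .not φ => !(KForm.sat G u φ)
  | .or φ ψ => KForm.sat G u φ || KForm.sat G u ψ
  | .ge0 E => decide (0 ≤ KExpr.val G u E)
/-- Value of a `K^#` expression at a pointed graph. -/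
def KExpr.val {V : Type} [Fintype V] (G : LGraph V) (u : V) : KExpr → ℤ
  | .const c => c
  | .ind φ => if KForm.sat G u φ then 1 else 0
  | .count φ =>
      ((Finset.univ.filter (fun v => G.edge u v = true ∧ KForm.sat G v φ = true)).card : ℤ)
  | .add E₁ E₂ => KExpr.val G u E₁ + KExpr.val G u E₂
  | .scale c E => c * KExpr.val G u E
end

/-- A `K^#` formula is satisfiable when it is true at some finite pointed
labeled graph. -/
def KSat (φ : KForm) : Prop :=
  ∃ (n : ℕ) (G : LGraph (Fin n)) (u : Fin n), KForm.sat G u φ = true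

/-!
Unravel the graph at the satisfying vertex `u` into the tree of walks from `u`, cut off at
the modal depth `d` of `φ`, each walk labeled like its last vertex. The children of a walk of
length `k < d` correspond bijectively to the successors of its last vertex, so every counting
term `#ψ` has the same value at the walk and at its last vertex as long as `ψ` has depth at
most `d - k - 1`; by induction on formulas, `φ` holds at the root `[]` of the tree.
-/

mutual
def KForm.depth : KForm → ℕ
  | .atom _ => 0
  | .not φ => φ.depth
  | .or φ ψ => max φ.depth ψ.depth
  | .ge0 E => E.depth
def KExpr.depth : KExpr → ℕ
  | .const _ => 0
  | .ind φ => φ.depth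
  | .count φ => φ.depth + 1
  | .add E₁ E₂ => max E₁.depth E₂.depth
  | .scale _ E => E.depth
end

namespace LGraph

variable {V W : Type} [Fintype V] [Fintype W]

def comap (G : LGraph V) (e : W ≃ V) : LGraph W :=
  ⟨fun a b => G.edge (e a) (e b), fun a p => G.label (e a) p⟩

mutual
theorem sat_comap (G : LGraph V) (e : W ≃ V) :
    ∀ (φ : KForm) (w : W), KForm.sat (G.comap e) w φ = KForm.sat G (e w) φ
  | .atom _, _ => rfl
  | .not φ, w => by simp only [KForm.sat, sat_comap G e φ w]
  | .or φ ψ, w => by simp only [KForm.sat, sat_comap G e φ w, sat_comap G e ψ w]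
  | .ge0 E, w => by simp only [KForm.sat, val_comap G e E w]
theorem val_comap (G : LGraph V) (e : W ≃ V) :
    ∀ (E : KExpr) (w : W), KExpr.val (G.comap e) w E = KExpr.val G (e w) E
  | .const _, _ => rfl
  | .ind φ, w => by simp only [KExpr.val, sat_comap G e φ w]
  | .count φ, w => by
      simp only [KExpr.val, Nat.cast_inj]
      exact Finset.card_equiv e fun b => by
        simp only [Finset.mem_filter, Finset.mem_univ, true_and, sat_comap G e φ b]
        exact Iff.rfl
  | .add E₁ E₂, w => by simp only [KExpr.val, val_comap G e E₁ w, val_comap G e E₂ w]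
  | .scale _ E, w => by simp only [KExpr.val, val_comap G e E w]
end

structure IsTreeRootedAt (G : LGraph V) (u : V) : Prop where
  reachable : ∀ v, Relation.ReflTransGen (fun a b => G.edge a b = true) u v
  root_no_parent : ∀ v, ¬ G.edge v u = true
  unique_parent : ∀ v, v ≠ u → ∃! w, G.edge w v = true

theorem IsTreeRootedAt.comap {G : LGraph V} {u : V} (hG : G.IsTreeRootedAt u) (e : W ≃ V) :
    (G.comap e).IsTreeRootedAt (e.symm u) where
  reachable w := by
    simpa [Function.onFun] using
      Relation.ReflTransGen.lift (p := fun a b => (G.comap e).edge a b = true) e.symm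
        (fun a b hab => by simpa [LGraph.comap, Function.onFun] using hab) _ _ (hG.reachable (e w))
  root_no_parent w := by simpa [LGraph.comap] using hG.root_no_parent (e w)
  unique_parent w hw := by
    obtain ⟨p, hp, hp_unique⟩ := hG.unique_parent (e w) (by simpa [Equiv.eq_symm_apply] using hw)
    exact ⟨e.symm p, by simpa [LGraph.comap] using hp,
      fun q hq => e.eq_symm_apply.2 (hp_unique (e q) hq)⟩

/-- `G.IsWalkFrom u l` says that `u :: l.reverse` is a walk in `G`: the walk is stored
newest vertex first, so that extending it is `List.cons`. -/
inductive IsWalkFrom (G : LGraph V) (u : V) : List V → Prop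
  | nil : IsWalkFrom G u []
  | cons {l : List V} {v : V} : IsWalkFrom G u l → G.edge (l.headD u) v = true →
      IsWalkFrom G u (v :: l)

def Unravel (G : LGraph V) (u : V) (d : ℕ) : Type :=
  {l : List V // G.IsWalkFrom u l ∧ l.length ≤ d}

namespace Unravel

variable {G : LGraph V} {u : V} {d : ℕ}

noncomputable instance : Fintype (Unravel G u d) :=
  have : Finite (Unravel G u d) :=
    ((List.finite_length_le V d).subset fun _ hl => hl.2).to_subtype
  Fintype.ofFinite _

def root : Unravel G u d := ⟨[], .nil, Nat.zero_le d⟩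

def last (a : Unravel G u d) : V := a.1.headD u

end Unravel

noncomputable def unravel (G : LGraph V) (u : V) (d : ℕ) : LGraph (Unravel G u d) :=
  ⟨fun a b => decide (∃ v, b.1 = v :: a.1), fun a p => G.label a.last p⟩

variable {G : LGraph V} {u : V} {d : ℕ}

theorem unravel_edge_iff {a b : Unravel G u d} :
    (G.unravel u d).edge a b = true ↔ ∃ v, b.1 = v :: a.1 := by
  simp [unravel]

theorem card_unravel_children (a : Unravel G u d) (ha : a.1.length < d) (P : V → Bool) :
    (Finset.univ.filter fun b => (G.unravel u d).edge a b = true ∧ P b.last = true).card =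
      (Finset.univ.filter fun v => G.edge a.last v = true ∧ P v = true).card := by
  symm
  refine Finset.card_bij (fun v hv => ⟨v :: a.1, .cons a.2.1 (Finset.mem_filter.1 hv).2.1, ha⟩)
    ?_ ?_ ?_
  · intro v hv
    exact Finset.mem_filter.2
      ⟨Finset.mem_univ _, unravel_edge_iff.2 ⟨v, rfl⟩, (Finset.mem_filter.1 hv).2.2⟩
  · intro v _ w _ hvw
    exact (List.cons.inj (congrArg Subtype.val hvw)).1
  · intro b hb
    obtain ⟨hab, hPb⟩ := (Finset.mem_filter.1 hb).2
    obtain ⟨v, hv⟩ := unravel_edge_iff.1 hab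
    refine ⟨v, ?_, Subtype.ext hv.symm⟩
    have hwalk := b.2.1
    rw [hv] at hwalk
    cases hwalk with
    | cons _ hedge =>
      simp only [Unravel.last, hv, List.headD_cons] at hPb
      exact Finset.mem_filter.2 ⟨Finset.mem_univ _, hedge, hPb⟩

mutual
theorem sat_unravel :
    ∀ (φ : KForm) (a : Unravel G u d), φ.depth + a.1.length ≤ d →
      KForm.sat (G.unravel u d) a φ = KForm.sat G a.last φ
  | .atom _, _, _ => rfl
  | .not φ, a, h => by
      simp only [KForm.sat, sat_unravel φ a (by simpa [KForm.depth] using h)]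
  | .or φ ψ, a, h => by
      simp only [KForm.depth] at h
      simp only [KForm.sat, sat_unravel φ a (by omega), sat_unravel ψ a (by omega)]
  | .ge0 E, a, h => by
      simp only [KForm.sat, val_unravel E a (by simpa [KForm.depth] using h)]
theorem val_unravel :
    ∀ (E : KExpr) (a : Unravel G u d), E.depth + a.1.length ≤ d →
      KExpr.val (G.unravel u d) a E = KExpr.val G a.last E
  | .const _, _, _ => rfl
  | .ind φ, a, h => by
      simp only [KExpr.val, sat_unravel φ a (by simpa [KExpr.depth] using h)]
  | .count φ, a, h => by
      simp only [KExpr.depth] at h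
      have hchildren : ∀ b, (G.unravel u d).edge a b = true →
          (KForm.sat (G.unravel u d) b φ = true ↔ KForm.sat G b.last φ = true) := by
        intro b hab
        obtain ⟨v, hv⟩ := unravel_edge_iff.1 hab
        have hlen : b.1.length = a.1.length + 1 := by simp [hv]
        rw [sat_unravel φ b (by omega)]
      simp only [KExpr.val, Nat.cast_inj]
      calc _ = (Finset.univ.filter fun b =>
              (G.unravel u d).edge a b = true ∧ KForm.sat G b.last φ = true).card :=
            congrArg Finset.card (Finset.filter_congr fun b _ =>
              and_congr_right fun hab => hchildren b hab)
        _ = _ := card_unravel_children a (by omega) fun v => KForm.sat G v φ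
  | .add E₁ E₂, a, h => by
      simp only [KExpr.depth] at h
      simp only [KExpr.val, val_unravel E₁ a (by omega), val_unravel E₂ a (by omega)]
  | .scale _ E, a, h => by
      simp only [KExpr.val, val_unravel E a (by simpa [KExpr.depth] using h)]
end

theorem sat_unravel_root (φ : KForm) :
    KForm.sat (G.unravel u φ.depth) Unravel.root φ = KForm.sat G u φ :=
  sat_unravel φ Unravel.root le_rfl

theorem unravel_reachable (a : Unravel G u d) :
    Relation.ReflTransGen (fun a b => (G.unravel u d).edge a b = true) Unravel.root a := by
  obtain ⟨l, hwalk, hlen⟩ := a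
  induction hwalk with
  | nil => exact .refl
  | @cons l v _ _ ih =>
    exact .tail (ih (Nat.le_of_succ_le hlen)) (unravel_edge_iff.2 ⟨v, rfl⟩)

theorem unravel_unique_parent (a : Unravel G u d) (ha : a ≠ Unravel.root) :
    ∃! p, (G.unravel u d).edge p a = true := by
  obtain ⟨l, hwalk, hlen⟩ := a
  cases hwalk with
  | nil => exact absurd rfl ha
  | @cons t v ht _ =>
    refine ⟨⟨t, ht, Nat.le_of_succ_le hlen⟩, unravel_edge_iff.2 ⟨v, rfl⟩, fun p hp => ?_⟩
    obtain ⟨w, hw⟩ := unravel_edge_iff.1 hp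
    exact Subtype.ext (List.cons.inj hw).2.symm

theorem unravel_isTreeRootedAt (G : LGraph V) (u : V) (d : ℕ) :
    (G.unravel u d).IsTreeRootedAt Unravel.root where
  reachable := unravel_reachable
  root_no_parent _ h := by
    obtain ⟨_, hv⟩ := unravel_edge_iff.1 h
    exact List.cons_ne_nil _ _ hv.symm
  unique_parent := unravel_unique_parent

end LGraph

/-- Tree-model property of `K^#`: a satisfiable formula is satisfiable at the root
of a finite tree: every vertex is reachable from the root `u`, the root has no
incoming edge, and every other vertex has exactly one incoming edge. -/
theorem tree_model_property (φ : KForm) (h : KSat φ) :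
    ∃ (n : ℕ) (G : LGraph (Fin n)) (u : Fin n),
      KForm.sat G u φ = true ∧
      (∀ v : Fin n, Relation.ReflTransGen (fun a b => G.edge a b = true) u v) ∧
      (∀ v : Fin n, ¬ (G.edge v u = true)) ∧
      (∀ v : Fin n, v ≠ u → ∃! w : Fin n, G.edge w v = true) := by
  obtain ⟨n, G, u, hsat⟩ := h
  let e := (Fintype.equivFin (LGraph.Unravel G u φ.depth)).symm
  have htree := (G.unravel_isTreeRootedAt u φ.depth).comap e
  refine ⟨_, (G.unravel u φ.depth).comap e, e.symm LGraph.Unravel.root, ?_,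
    htree.reachable, htree.root_no_parent, htree.unique_parent⟩
  rw [LGraph.sat_comap, e.apply_symm_apply, LGraph.sat_unravel_root]
  exact hsat
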